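/- Let (D,a⃗) be a pointed database, (A,b⃗) a pointed structure, Σ ⊇ sig(D) a signature, and ℓ ≥ |D|. If D_{con(a⃗)},a⃗ ≼^ℓ_{openGF,Σ} A,b⃗ and there is no homomorphism D_{con(a⃗)},a⃗ → A,b⃗, then there exist distinct elements d,d' of A at distance at most |D| from [b⃗] in the Gaifman graph of A such that A,d ∼^{ℓ−|D|}_{openGF,Σ} A,d'. -/

import Mathlib

namespace Sep

/-! ## First-order syntax over relation symbols (arity, code) and variables ℕ.
Constants are natural numbers; formulas contain no constants. -/

inductive Fml : Type where
  | eq : ℕ → ℕ → Fml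
  | rel : (k : ℕ) → ℕ → (Fin k → ℕ) → Fml
  | neg : Fml → Fml
  | and : Fml → Fml → Fml
  | or : Fml → Fml → Fml
  | ex : ℕ → Fml → Fml
  | all : ℕ → Fml → Fml

namespace Fml

/-- Implication, as an abbreviation. -/
def imp (φ ψ : Fml) : Fml := .or (.neg φ) ψ

/-- Free variables of a formula. -/
def free : Fml → Set ℕ
  | eq x y => {x, y}
  | rel _ _ v => Set.range v
  | neg φ => φ.free
  | and φ ψ => φ.free ∪ ψ.free
  | or φ ψ => φ.free ∪ ψ.free
  | ex y φ => φ.free \ {y}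
  | all y φ => φ.free \ {y}

/-- All variables (free or bound) occurring in a formula. -/
def vars : Fml → Set ℕ
  | eq x y => {x, y}
  | rel _ _ v => Set.range v
  | neg φ => φ.vars
  | and φ ψ => φ.vars ∪ ψ.vars
  | or φ ψ => φ.vars ∪ ψ.vars
  | ex y φ => insert y φ.vars
  | all y φ => insert y φ.vars

/-- Variables occurring in equality atoms of a formula. -/
def eqVars : Fml → Set ℕ
  | eq x y => {x, y}
  | rel _ _ _ => ∅
  | neg φ => φ.eqVars
  | and φ ψ => φ.eqVars ∪ ψ.eqVars
  | or φ ψ => φ.eqVars ∪ ψ.eqVars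
  | ex _ φ => φ.eqVars
  | all _ φ => φ.eqVars

/-- The signature (set of relation symbols, as pairs (arity, code)) of a formula. -/
def sig : Fml → Set (ℕ × ℕ)
  | eq _ _ => ∅
  | rel k R _ => {(k, R)}
  | neg φ => φ.sig
  | and φ ψ => φ.sig ∪ ψ.sig
  | or φ ψ => φ.sig ∪ ψ.sig
  | ex _ φ => φ.sig
  | all _ φ => φ.sig

/-- Size of a formula (number of symbols, names counting as one symbol). -/
def size : Fml → ℕ
  | eq _ _ => 3
  | rel k _ _ => 1 + k
  | neg φ => 1 + φ.size
  | and φ ψ => 1 + φ.size + ψ.size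
  | or φ ψ => 1 + φ.size + ψ.size
  | ex _ φ => 2 + φ.size
  | all _ φ => 2 + φ.size

/-- Subformulas of a formula. -/
def subfmls : Fml → Set Fml
  | eq x y => {.eq x y}
  | rel k R v => {.rel k R v}
  | neg φ => insert (.neg φ) φ.subfmls
  | and φ ψ => insert (.and φ ψ) (φ.subfmls ∪ ψ.subfmls)
  | or φ ψ => insert (.or φ ψ) (φ.subfmls ∪ ψ.subfmls)
  | ex y φ => insert (.ex y φ) φ.subfmls
  | all y φ => insert (.all y φ) φ.subfmls

end Fml

/-- Conjunction of a list of formulas (`x₀ = x₀` as the empty conjunction). -/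
def bigAnd : List Fml → Fml
  | [] => .eq 0 0
  | [φ] => φ
  | φ :: ψ :: rest => .and φ (bigAnd (ψ :: rest))

/-- Disjunction of a list of formulas. -/
def bigOr : List Fml → Fml
  | [] => .neg (.eq 0 0)
  | [φ] => φ
  | φ :: ψ :: rest => .or φ (bigOr (ψ :: rest))

/-- Existential quantification over a list of variables. -/
def exList (ys : List ℕ) (φ : Fml) : Fml := ys.foldr Fml.ex φ

/-- Universal quantification over a list of variables. -/
def allList (ys : List ℕ) (φ : Fml) : Fml := ys.foldr Fml.all φ

/-- The atom `R(x₀,…,x_{k-1})` over the fixed tuple of distinct variables `0,…,k-1`. -/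
def baseAtom (k R : ℕ) : Fml := .rel k R fun i => (i : ℕ)

/-- The formula `∃ y⃗₁ (R(x⃗_k) ∧ ¬ x_u = x_w)` where `y⃗₁` is `x⃗_k` without `x_u`. -/
def connFml (k R u w : ℕ) : Fml :=
  exList ((List.range k).filter fun y => y != u) (.and (baseAtom k R) (.neg (.eq u w)))

/-! ## Structures and satisfaction -/

/-- A relational structure: a nonempty domain, interpretations of all relation
symbols, and interpretations of all constants (no unique name assumption). -/
structure Str : Type 1 where
  Dom : Type
  dom_nonempty : Nonempty Dom
  rel : (k : ℕ) → ℕ → (Fin k → Dom) → Prop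
  const : ℕ → Dom

namespace Fml

/-- Satisfaction of a formula in a structure under a variable assignment. -/
def Sat (A : Str) : Fml → (ℕ → A.Dom) → Prop
  | eq x y, v => v x = v y
  | rel k R args, v => A.rel k R fun i => v (args i)
  | neg φ, v => ¬ φ.Sat A v
  | and φ ψ, v => φ.Sat A v ∧ ψ.Sat A v
  | or φ ψ, v => φ.Sat A v ∨ ψ.Sat A v
  | ex y φ, v => ∃ d : A.Dom, φ.Sat A (Function.update v y d)
  | all y φ, v => ∀ d : A.Dom, φ.Sat A (Function.update v y d)

/-- Satisfaction relativized to a subset of the domain (quantifiers range over the subset). -/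
def SatIn (A : Str) (Dsub : Set A.Dom) : Fml → (ℕ → A.Dom) → Prop
  | eq x y, v => v x = v y
  | rel k R args, v => A.rel k R fun i => v (args i)
  | neg φ, v => ¬ φ.SatIn A Dsub v
  | and φ ψ, v => φ.SatIn A Dsub v ∧ ψ.SatIn A Dsub v
  | or φ ψ, v => φ.SatIn A Dsub v ∨ ψ.SatIn A Dsub v
  | ex y φ, v => ∃ d ∈ Dsub, φ.SatIn A Dsub (Function.update v y d)
  | all y φ, v => ∀ d ∈ Dsub, φ.SatIn A Dsub (Function.update v y d)

end Fml


/-! ## Databases and knowledge bases -/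

/-- A ground atom `R(a⃗)` over constants (natural numbers). -/
structure Atom : Type where
  arity : ℕ
  rel : ℕ
  args : Fin arity → ℕ

/-- Rename the constants of an atom. -/
def Atom.mapC (f : ℕ → ℕ) (a : Atom) : Atom := ⟨a.arity, a.rel, f ∘ a.args⟩

/-- An atom holds in a structure under an interpretation of the constants. -/
def Atom.Holds (a : Atom) (A : Str) (h : ℕ → A.Dom) : Prop :=
  A.rel a.arity a.rel fun i => h (a.args i)

/-- A database: a finite set of ground atoms. -/
structure Database : Type where
  atoms : Set Atom
  finite : atoms.Finite

/-- The constants occurring in a database. -/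
def Database.consts (D : Database) : Set ℕ := ⋃ a ∈ D.atoms, Set.range a.args

lemma Database.consts_finite (D : Database) : D.consts.Finite :=
  D.finite.biUnion fun _ _ => Set.finite_range _

/-- Number of constants of a database (used as its size `|D|`). -/
noncomputable def Database.csize (D : Database) : ℕ := D.consts.ncard

/-- The signature of a database. -/
def Database.sig (D : Database) : Set (ℕ × ℕ) := (fun a => (a.arity, a.rel)) '' D.atoms

/-- Two constants are adjacent in the Gaifman graph of a database. -/
def Database.adj (D : Database) (c d : ℕ) : Prop :=
  ∃ a ∈ D.atoms, c ∈ Set.range a.args ∧ d ∈ Set.range a.args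

/-- Restriction of a database to the atoms containing a constant reachable
from the set `S` in the Gaifman graph. -/
def Database.conRestrictSet (D : Database) (S : Set ℕ) : Database where
  atoms := {a | a ∈ D.atoms ∧ ∃ c ∈ S, ∃ d ∈ Set.range a.args, Relation.ReflTransGen D.adj c d}
  finite := D.finite.subset fun _ ha => ha.1

/-- `D_{con(a⃗)}`: restriction of `D` to the constants reachable from `[a⃗]`. -/
def Database.conRestrict (D : Database) {n : ℕ} (t : Fin n → ℕ) : Database :=
  D.conRestrictSet (Set.range t)

/-- A knowledge base: a finite ontology (set of formulas) and a database. -/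
structure KB : Type where
  onto : Set Fml
  onto_finite : onto.Finite
  db : Database

/-- The signature of a KB. -/
def KB.sig (K : KB) : Set (ℕ × ℕ) := (⋃ φ ∈ K.onto, φ.sig) ∪ K.db.sig

/-- Size of the ontology of a KB. -/
noncomputable def KB.ontoSize (K : KB) : ℕ := K.onto_finite.toFinset.sum Fml.size

/-- A structure is a model of a KB if it satisfies every sentence of the
ontology and every ground atom of the database. -/
def Str.IsModel (A : Str) (K : KB) : Prop :=
  (∀ φ ∈ K.onto, ∀ v : ℕ → A.Dom, φ.Sat A v) ∧ ∀ a ∈ K.db.atoms, a.Holds A A.const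

/-- Satisfiability of a KB. -/
def KB.Satisfiable (K : KB) : Prop := ∃ A : Str, A.IsModel K

/-- `K ⊨ φ(t⃗)`: every model of `K` satisfies `φ` at the tuple of constants `t⃗`. -/
def KB.entails (K : KB) {n : ℕ} (φ : Fml) (t : Fin n → ℕ) : Prop :=
  ∀ A : Str, A.IsModel K → ∀ v : ℕ → A.Dom, (∀ i : Fin n, v i.1 = A.const (t i)) → φ.Sat A v

/-! ## Separability -/

/-- `φ(x₀,…,x_{n-1})` (weakly) separates `(K, P, N)`. -/
def Separates {n : ℕ} (K : KB) (P N : Set (Fin n → ℕ)) (φ : Fml) : Prop :=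
  (∀ m ∈ φ.free, m < n) ∧ (∀ a ∈ P, K.entails φ a) ∧ ∀ b ∈ N, ¬ K.entails φ b

/-- `φ(x₀,…,x_{n-1})` strongly separates `(K, P, N)`. -/
def StronglySeparates {n : ℕ} (K : KB) (P N : Set (Fin n → ℕ)) (φ : Fml) : Prop :=
  (∀ m ∈ φ.free, m < n) ∧ (∀ a ∈ P, K.entails φ a) ∧ ∀ b ∈ N, K.entails (Fml.neg φ) b

/-- Projective separability in a language `L` (arbitrary helper symbols allowed). -/
def ProjSeparable (L : Set Fml) {n : ℕ} (K : KB) (P N : Set (Fin n → ℕ)) : Prop :=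
  ∃ φ ∈ L, Separates K P N φ

/-- Non-projective separability in a language `L` (only symbols of `sig(K)`). -/
def NonProjSeparable (L : Set Fml) {n : ℕ} (K : KB) (P N : Set (Fin n → ℕ)) : Prop :=
  ∃ φ ∈ L, φ.sig ⊆ K.sig ∧ Separates K P N φ

/-- Projective strong separability in a language `L`. -/
def ProjStronglySeparable (L : Set Fml) {n : ℕ} (K : KB) (P N : Set (Fin n → ℕ)) : Prop :=
  ∃ φ ∈ L, StronglySeparates K P N φ

/-- Non-projective strong separability in a language `L`. -/
def NonProjStronglySeparable (L : Set Fml) {n : ℕ} (K : KB) (P N : Set (Fin n → ℕ)) : Prop :=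
  ∃ φ ∈ L, φ.sig ⊆ K.sig ∧ StronglySeparates K P N φ

/-- A fragment of FO: a set of formulas closed under conjunction. -/
def IsFragment (L : Set Fml) : Prop := ∀ φ ∈ L, ∀ ψ ∈ L, Fml.and φ ψ ∈ L

/-! ## Homomorphisms from databases to structures -/

/-- `h` is a homomorphism from the database `D` into the structure `A`
(constants need not be preserved). -/
def DbHom (D : Database) (A : Str) (h : ℕ → A.Dom) : Prop :=
  ∀ a ∈ D.atoms, a.Holds A h

/-- `D,t⃗ → A,g⃗`: a homomorphism of pointed structures. -/
def PointedHom (D : Database) {n : ℕ} (t : Fin n → ℕ) (A : Str) (g : Fin n → A.Dom) : Prop :=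
  ∃ h : ℕ → A.Dom, DbHom D A h ∧ ∀ i : Fin n, h (t i) = g i

/-! ## The canonical CQ of a pointed database -/

/-- The variable associated with a constant `c` by the canonical CQ of `(D, t⃗)`:
the least answer variable `i` with `t i = c` if it exists, otherwise `n + c`. -/
noncomputable def varOf {n : ℕ} (t : Fin n → ℕ) (c : ℕ) : ℕ :=
  if ∃ i : Fin n, t i = c then sInf {m : ℕ | ∃ h : m < n, t ⟨m, h⟩ = c} else n + c

lemma Database.qvars_finite (D : Database) {n : ℕ} (t : Fin n → ℕ) :
    (D.consts \ Set.range t).Finite :=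
  D.consts_finite.subset Set.diff_subset

/-- The canonical CQ `φ_{D,t⃗}(x₀,…,x_{n-1})` of a pointed database. -/
noncomputable def canonCQ (D : Database) {n : ℕ} (t : Fin n → ℕ) : Fml :=
  exList ((D.qvars_finite t).toFinset.toList.map fun c => n + c)
    (bigAnd
      ((D.finite.toFinset.toList.map fun a =>
          Fml.rel a.arity a.rel fun i => varOf t (a.args i))
        ++
       ((List.finRange n ×ˢ List.finRange n).filterMap fun p =>
          if t p.1 = t p.2 then some (Fml.eq p.1.1 p.2.1) else none)))

/-- The canonical UCQ `⋁_{a⃗ ∈ P} φ_{D_{con(a⃗)},a⃗}`. -/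
noncomputable def canonUCQ (K : KB) {n : ℕ} (P : Set (Fin n → ℕ)) (hP : P.Finite) : Fml :=
  bigOr (hP.toFinset.toList.map fun t => canonCQ (K.db.conRestrict t) t)

/-! ## The merged database `D_{a⃗ = b⃗}` -/

/-- Equivalence identifying (the code of) `a i` with (the code of) the copy of `b i`. -/
def mergeEquiv {n : ℕ} (a b : Fin n → ℕ) : ℕ → ℕ → Prop :=
  Relation.ReflTransGen fun x y =>
    (∃ i : Fin n, x = 2 * a i ∧ y = 2 * b i + 1) ∨ ∃ i : Fin n, y = 2 * a i ∧ x = 2 * b i + 1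

/-- Canonical representative of the equivalence class. -/
noncomputable def mergeRep {n : ℕ} (a b : Fin n → ℕ) (x : ℕ) : ℕ :=
  sInf {y | mergeEquiv a b x y}

/-- `D_{a⃗ = b⃗}`: the union of `D` with a disjoint copy of itself in which
`a i` is identified with the copy of `b i`, for every `i`. -/
noncomputable def Database.merge (D : Database) {n : ℕ} (a b : Fin n → ℕ) : Database where
  atoms := (Atom.mapC (fun c => mergeRep a b (2 * c)) '' D.atoms) ∪
           (Atom.mapC (fun c => mergeRep a b (2 * c + 1)) '' D.atoms)
  finite := (D.finite.image _).union (D.finite.image _)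


/-! ## Fragments of FO -/

/-- Atomic formulas: equalities and relational atoms. -/
inductive IsAtomic : Fml → Prop
  | eq (x y : ℕ) : IsAtomic (.eq x y)
  | rel (k R : ℕ) (v : Fin k → ℕ) : IsAtomic (.rel k R v)

/-- Relational atoms. -/
inductive IsRelAtom : Fml → Prop
  | rel (k R : ℕ) (v : Fin k → ℕ) : IsRelAtom (.rel k R v)

/-- Conjunctions of atomic formulas. -/
inductive IsQFConj : Fml → Prop
  | atom {φ : Fml} : IsAtomic φ → IsQFConj φ
  | and {φ ψ : Fml} : IsQFConj φ → IsQFConj ψ → IsQFConj (.and φ ψ)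

/-- Conjunctive queries: existentially quantified conjunctions of relational
atoms and equalities between free variables. -/
inductive IsCQ : Fml → Prop
  | base {φ : Fml} : IsQFConj φ → IsCQ φ
  | ex {φ : Fml} (y : ℕ) : IsCQ φ → y ∉ φ.eqVars → IsCQ (.ex y φ)

/-- Unions of conjunctive queries: disjunctions of CQs with the same free variables. -/
inductive IsUCQ : Fml → Prop
  | cq {φ : Fml} : IsCQ φ → IsUCQ φ
  | or {φ ψ : Fml} : IsUCQ φ → IsUCQ ψ → φ.free = ψ.free → IsUCQ (.or φ ψ)

def UCQs : Set Fml := {φ | IsUCQ φ}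

/-- The guarded fragment GF. -/
inductive IsGF : Fml → Prop
  | eq (x y : ℕ) : IsGF (.eq x y)
  | rel (k R : ℕ) (v : Fin k → ℕ) : IsGF (.rel k R v)
  | neg {φ : Fml} : IsGF φ → IsGF (.neg φ)
  | and {φ ψ : Fml} : IsGF φ → IsGF ψ → IsGF (.and φ ψ)
  | or {φ ψ : Fml} : IsGF φ → IsGF ψ → IsGF (.or φ ψ)
  | exg (ys : List ℕ) {α φ : Fml} : IsAtomic α → IsGF φ → φ.free ⊆ α.free →
      (∀ y ∈ ys, y ∈ α.free) → IsGF (exList ys (.and α φ))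
  | allg (ys : List ℕ) {α φ : Fml} : IsAtomic α → IsGF φ → φ.free ⊆ α.free →
      (∀ y ∈ ys, y ∈ α.free) → IsGF (allList ys (α.imp φ))

def GFs : Set Fml := {φ | IsGF φ}

/-- The open guarded fragment openGF: all subformulas are open and equality is
never used as a guard. -/
inductive IsOpenGF : Fml → Prop
  | eq (x y : ℕ) : IsOpenGF (.eq x y)
  | rel (k R : ℕ) (v : Fin k → ℕ) : 0 < k → IsOpenGF (.rel k R v)
  | neg {φ : Fml} : IsOpenGF φ → IsOpenGF (.neg φ)
  | and {φ ψ : Fml} : IsOpenGF φ → IsOpenGF ψ → IsOpenGF (.and φ ψ)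
  | or {φ ψ : Fml} : IsOpenGF φ → IsOpenGF ψ → IsOpenGF (.or φ ψ)
  | exg (ys : List ℕ) {α φ : Fml} : IsRelAtom α → IsOpenGF φ → φ.free ⊆ α.free →
      (∀ y ∈ ys, y ∈ α.free) → ((Fml.and α φ).free \ {y | y ∈ ys}).Nonempty →
      IsOpenGF (exList ys (.and α φ))
  | allg (ys : List ℕ) {α φ : Fml} : IsRelAtom α → IsOpenGF φ → φ.free ⊆ α.free →
      (∀ y ∈ ys, y ∈ α.free) → ((α.imp φ).free \ {y | y ∈ ys}).Nonempty →
      IsOpenGF (allList ys (α.imp φ))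

def OpenGFs : Set Fml := {φ | IsOpenGF φ}

/-- The guarded negation fragment GNFO. -/
inductive IsGNFO : Fml → Prop
  | eq (x y : ℕ) : IsGNFO (.eq x y)
  | rel (k R : ℕ) (v : Fin k → ℕ) : IsGNFO (.rel k R v)
  | and {φ ψ : Fml} : IsGNFO φ → IsGNFO ψ → IsGNFO (.and φ ψ)
  | or {φ ψ : Fml} : IsGNFO φ → IsGNFO ψ → IsGNFO (.or φ ψ)
  | ex (y : ℕ) {φ : Fml} : IsGNFO φ → IsGNFO (.ex y φ)
  | gneg {α φ : Fml} : IsAtomic α → IsGNFO φ → φ.free ⊆ α.free → IsGNFO (.and α (.neg φ))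

def GNFOs : Set Fml := {φ | IsGNFO φ}

/-- The two-variable fragment FO²: only the two fixed variables `0` and `1` are used. -/
def FO2s : Set Fml := {φ : Fml | φ.vars ⊆ {0, 1}}

/-- Two variables are adjacent in the Gaifman graph of a formula (they co-occur
in an atom of the formula). -/
def Fml.varAdj (φ : Fml) (x y : ℕ) : Prop :=
  ∃ ψ ∈ φ.subfmls, IsAtomic ψ ∧ x ∈ ψ.free ∧ y ∈ ψ.free

/-- A rooted CQ: every variable is reachable from an answer (free) variable in
the Gaifman graph of the CQ. -/
def IsRootedCQ (φ : Fml) : Prop :=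
  IsCQ φ ∧ ∀ x ∈ φ.vars, ∃ u ∈ φ.free, Relation.ReflTransGen φ.varAdj u x

/-- Rooted UCQs. -/
inductive IsRootedUCQ : Fml → Prop
  | cq {φ : Fml} : IsRootedCQ φ → IsRootedUCQ φ
  | or {φ ψ : Fml} : IsRootedUCQ φ → IsRootedUCQ ψ → φ.free = ψ.free → IsRootedUCQ (.or φ ψ)

/-! ## ALCI concepts -/

/-- ALCI concepts: `⊤`, concept names, `¬`, `⊓`, and `∃R.C`/`∃R⁻.C`
(the Boolean indicates an inverse role). -/
inductive Concept : Type where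
  | top : Concept
  | atom : ℕ → Concept
  | neg : Concept → Concept
  | inter : Concept → Concept → Concept
  | exRole : Bool → ℕ → Concept → Concept

namespace Concept

/-- Extension of a concept in a structure. -/
def interp (A : Str) : Concept → Set A.Dom
  | top => Set.univ
  | atom c => {d | A.rel 1 c ![d]}
  | neg C => (C.interp A)ᶜ
  | inter C D => C.interp A ∩ D.interp A
  | exRole inv R C => {d | ∃ e ∈ C.interp A, if inv then A.rel 2 R ![e, d] else A.rel 2 R ![d, e]}

/-- Signature of a concept. -/
def csig : Concept → Set (ℕ × ℕ)
  | top => ∅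
  | atom c => {(1, c)}
  | neg C => C.csig
  | inter C D => C.csig ∪ D.csig
  | exRole _ R C => insert (2, R) C.csig

/-- Size of a concept. -/
def size : Concept → ℕ
  | top => 1
  | atom _ => 1
  | neg C => 1 + C.size
  | inter C D => 1 + C.size + D.size
  | exRole _ _ C => 2 + C.size

/-- Subconcepts of a concept. -/
def subconcepts : Concept → Set Concept
  | top => {top}
  | atom c => {atom c}
  | neg C => insert (neg C) C.subconcepts
  | inter C D => insert (inter C D) (C.subconcepts ∪ D.subconcepts)
  | exRole i R C => insert (exRole i R C) C.subconcepts

/-- The standard translation of a concept into an FO formula with free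
variable `x ∈ {0,1}` (the other of the two variables is `1 - x`). -/
def toFml : Concept → ℕ → Fml
  | top, x => .eq x x
  | atom c, x => .rel 1 c ![x]
  | neg C, x => .neg (C.toFml x)
  | inter C D, x => .and (C.toFml x) (D.toFml x)
  | exRole inv R C, x =>
      .ex (1 - x) (.and (if inv then Fml.rel 2 R ![1 - x, x] else Fml.rel 2 R ![x, 1 - x])
        (C.toFml (1 - x)))

end Concept

/-- ALCI concepts, viewed as FO formulas in the free variable `x₀`. -/
def ALCIs : Set Fml := {φ | ∃ C : Concept, φ = C.toFml 0}


/-! ## ALCI knowledge bases, types, bisimulations -/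

/-- The FO translation `∀x₀∀x₁ (C(x₀) → D(x₀))` of a concept inclusion. -/
def CIfml (p : Concept × Concept) : Fml :=
  .all 1 (.all 0 ((p.1.toFml 0).imp (p.2.toFml 0)))

/-- An ALCI knowledge base: a finite set of concept inclusions together with a
database containing only unary and binary atoms. -/
structure ALCIKB : Type where
  onto : Set (Concept × Concept)
  onto_finite : onto.Finite
  db : Database
  db_arity : ∀ a ∈ db.atoms, a.arity = 1 ∨ a.arity = 2

/-- The underlying FO knowledge base of an ALCI KB. -/
def ALCIKB.toKB (K : ALCIKB) : KB where
  onto := CIfml '' K.onto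
  onto_finite := K.onto_finite.image _
  db := K.db

/-- Signature of an ALCI KB. -/
def ALCIKB.sigK (K : ALCIKB) : Set (ℕ × ℕ) := K.toKB.sig

/-- Size of the ontology of an ALCI KB. -/
noncomputable def ALCIKB.ontoSize (K : ALCIKB) : ℕ :=
  K.onto_finite.toFinset.sum fun p => p.1.size + p.2.size + 1

/-- `cl(K)`: the concepts occurring in `K` together with `∃R.⊤`, `∃R⁻.⊤` for all
role names of `sig(K)`, closed under subconcepts and single negation. -/
def ALCIKB.cl (K : ALCIKB) : Set Concept :=
  ((⋃ p ∈ K.onto, p.1.subconcepts ∪ p.2.subconcepts) ∪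
     (⋃ C ∈ {C : Concept | ∃ a ∈ K.db.atoms, a.arity = 1 ∧ C = Concept.atom a.rel}, C.subconcepts) ∪
     (⋃ C ∈ {C : Concept | ∃ R i, ((2 : ℕ), R) ∈ K.sigK ∧ C = Concept.exRole i R Concept.top},
        C.subconcepts)) ∪
  Concept.neg ''
    ((⋃ p ∈ K.onto, p.1.subconcepts ∪ p.2.subconcepts) ∪
     (⋃ C ∈ {C : Concept | ∃ a ∈ K.db.atoms, a.arity = 1 ∧ C = Concept.atom a.rel}, C.subconcepts) ∪
     (⋃ C ∈ {C : Concept | ∃ R i, ((2 : ℕ), R) ∈ K.sigK ∧ C = Concept.exRole i R Concept.top},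
        C.subconcepts))

/-- `tp_K(A, d)`: the `K`-type of `d` in `A`. -/
def ALCIKB.tp (K : ALCIKB) (A : Str) (d : A.Dom) : Set Concept :=
  {C | C ∈ K.cl ∧ d ∈ C.interp A}

/-- `t` is a `K`-type: it is realized in some model of `K`. -/
def ALCIKB.IsType (K : ALCIKB) (t : Set Concept) : Prop :=
  ∃ A : Str, A.IsModel K.toKB ∧ ∃ d : A.Dom, K.tp A d = t

/-- `t` is realizable in `K, b`. -/
def ALCIKB.RealizableAt (K : ALCIKB) (b : ℕ) (t : Set Concept) : Prop :=
  ∃ A : Str, A.IsModel K.toKB ∧ K.tp A (A.const b) = t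

/-- A type is connected if it contains `∃R.⊤` for some role `R`. -/
def TypeConnected (t : Set Concept) : Prop :=
  ∃ i R, Concept.exRole i R Concept.top ∈ t

/-- `ρ = (inv, R)` is a role (a role name or its inverse); `roleHolds A ρ d e`
says that `(d, e)` is in the extension of the role. -/
def roleHolds (A : Str) (ρ : Bool × ℕ) (d e : A.Dom) : Prop :=
  if ρ.1 then A.rel 2 ρ.2 ![e, d] else A.rel 2 ρ.2 ![d, e]

/-- `S` is a Σ-bisimulation (for ALCI) between `A` and `B`. -/
structure IsALCIBisim (sg : Set (ℕ × ℕ)) (A B : Str) (S : Set (A.Dom × B.Dom)) : Prop where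
  atom : ∀ p ∈ S, ∀ c : ℕ, (1, c) ∈ sg → (A.rel 1 c ![p.1] ↔ B.rel 1 c ![p.2])
  forth : ∀ p ∈ S, ∀ ρ : Bool × ℕ, (2, ρ.2) ∈ sg →
    ∀ d' : A.Dom, roleHolds A ρ p.1 d' → ∃ e' : B.Dom, roleHolds B ρ p.2 e' ∧ (d', e') ∈ S
  back : ∀ p ∈ S, ∀ ρ : Bool × ℕ, (2, ρ.2) ∈ sg →
    ∀ e' : B.Dom, roleHolds B ρ p.2 e' → ∃ d' : A.Dom, roleHolds A ρ p.1 d' ∧ (d', e') ∈ S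

/-- `A,d ∼_{ALCI,Σ} B,e`. -/
def ALCIBisimilar (sg : Set (ℕ × ℕ)) (A : Str) (d : A.Dom) (B : Str) (e : B.Dom) : Prop :=
  ∃ S : Set (A.Dom × B.Dom), IsALCIBisim sg A B S ∧ (d, e) ∈ S

/-- A `K`-type `t` is ALCI-complete. -/
def ALCIKB.TypeComplete (K : ALCIKB) (t : Set Concept) : Prop :=
  ∀ A B : Str, A.IsModel K.toKB → B.IsModel K.toKB → ∀ (d : A.Dom) (e : B.Dom),
    K.tp A d = t → K.tp B e = t → ALCIBisimilar K.sigK A d B e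

/-- `(K,P,N)` is strongly incomplete: no connected `K`-type realizable at some
negative example is ALCI-complete. -/
def ALCIKB.StronglyIncomplete (K : ALCIKB) (N : Set ℕ) : Prop :=
  ∀ t : Set Concept, TypeConnected t → (∃ b ∈ N, K.RealizableAt b t) → ¬ K.TypeComplete t

/-- `t₁ ⇝_ρ t₂`: the types are `ρ`-coherent. -/
def ALCIKB.Coherent (K : ALCIKB) (t₁ t₂ : Set Concept) (ρ : Bool × ℕ) : Prop :=
  ∃ A : Str, A.IsModel K.toKB ∧ ∃ d e : A.Dom, K.tp A d = t₁ ∧ K.tp A e = t₂ ∧ roleHolds A ρ d e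

/-- The sequence `t₀ ρ₀ … ρ_n t_{n+1}` witnesses ALCI-incompleteness of the type `t`. -/
def ALCIKB.WitSeq (K : ALCIKB) (t : Set Concept) (n : ℕ)
    (ts : Fin (n + 2) → Set Concept) (ρs : Fin (n + 1) → Bool × ℕ) : Prop :=
  1 ≤ n ∧
  ts 0 = t ∧
  (∀ i : Fin (n + 2), K.IsType (ts i)) ∧
  (∀ i : Fin (n + 1), ((2 : ℕ), (ρs i).2) ∈ K.sigK) ∧
  (∀ i : Fin (n + 1), K.Coherent (ts i.castSucc) (ts i.succ) (ρs i)) ∧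
  ∃ A : Str, A.IsModel K.toKB ∧ ∃ d e : A.Dom,
    roleHolds A (ρs ⟨n - 1, by omega⟩) d e ∧
    K.tp A d = ts ⟨n - 1, by omega⟩ ∧ K.tp A e = ts ⟨n, by omega⟩ ∧
    ¬ ∃ f : A.Dom, K.tp A f = ts ⟨n + 1, by omega⟩ ∧ roleHolds A (ρs ⟨n, by omega⟩) e f

/-! ### Weak and strong separability by ALCI concepts -/

/-- A concept `C` (weakly) separates `(K, P, N)`. -/
def ALCIKB.SeparatesC (K : ALCIKB) (P N : Set ℕ) (C : Concept) : Prop :=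
  (∀ a ∈ P, ∀ A : Str, A.IsModel K.toKB → A.const a ∈ C.interp A) ∧
  ∀ b ∈ N, ¬ ∀ A : Str, A.IsModel K.toKB → A.const b ∈ C.interp A

/-- A concept `C` strongly separates `(K, P, N)`. -/
def ALCIKB.StronglySeparatesC (K : ALCIKB) (P N : Set ℕ) (C : Concept) : Prop :=
  (∀ a ∈ P, ∀ A : Str, A.IsModel K.toKB → A.const a ∈ C.interp A) ∧
  ∀ b ∈ N, ∀ A : Str, A.IsModel K.toKB → A.const b ∉ C.interp A

/-- Non-projective ALCI-separability of a labeled ALCI KB. -/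
def ALCIKB.CSeparable (K : ALCIKB) (P N : Set ℕ) : Prop :=
  ∃ C : Concept, C.csig ⊆ K.sigK ∧ K.SeparatesC P N C

/-- Projective ALCI-separability of a labeled ALCI KB. -/
def ALCIKB.CProjSeparable (K : ALCIKB) (P N : Set ℕ) : Prop :=
  ∃ C : Concept, K.SeparatesC P N C

/-- Non-projective strong ALCI-separability of a labeled ALCI KB. -/
def ALCIKB.CStronglySeparable (K : ALCIKB) (P N : Set ℕ) : Prop :=
  ∃ C : Concept, C.csig ⊆ K.sigK ∧ K.StronglySeparatesC P N C

/-! ### ALCI(Σ)-embeddings -/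

/-- An ALCI(Σ)-embedding of a (unary/binary) database into a structure. -/
def ALCIEmbed (sg : Set (ℕ × ℕ)) (D : Database) (A : Str) (S : Set (ℕ × A.Dom)) : Prop :=
  (∀ p ∈ S, ∀ c : ℕ, (⟨1, c, ![p.1]⟩ : Atom) ∈ D.atoms → A.rel 1 c ![p.2]) ∧
  (∀ p ∈ S, ∀ q ∈ S, p.1 = q.1 → ALCIBisimilar sg A p.2 A q.2) ∧
  (∀ p ∈ S, ∀ R a', (⟨2, R, ![p.1, a']⟩ : Atom) ∈ D.atoms →
      ∃ b' : A.Dom, A.rel 2 R ![p.2, b'] ∧ (a', b') ∈ S) ∧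
  (∀ p ∈ S, ∀ R a', (⟨2, R, ![a', p.1]⟩ : Atom) ∈ D.atoms →
      ∃ b' : A.Dom, A.rel 2 R ![b', p.2] ∧ (a', b') ∈ S)

/-- `D,a ≼_Σ A,d`: some ALCI(Σ)-embedding contains `(a, d)`. -/
def ALCIEmbeddable (sg : Set (ℕ × ℕ)) (D : Database) (a : ℕ) (A : Str) (d : A.Dom) : Prop :=
  ∃ S : Set (ℕ × A.Dom), ALCIEmbed sg D A S ∧ (a, d) ∈ S

/-! ### Forest models -/

/-- There is a role edge from `d` to `e` (in either direction). -/
def Str.RoleEdge (A : Str) (d e : A.Dom) : Prop :=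
  ∃ R, A.rel 2 R ![d, e] ∨ A.rel 2 R ![e, d]

/-- `(d, e)` is an edge induced by a binary database atom. -/
def Str.DbEdge (A : Str) (K : ALCIKB) (d e : A.Dom) : Prop :=
  ∃ R x y, (⟨2, R, ![x, y]⟩ : Atom) ∈ K.db.atoms ∧ d = A.const x ∧ e = A.const y

/-- A role edge that is not induced by the database. -/
def Str.TreeEdge (A : Str) (K : ALCIKB) (d e : A.Dom) : Prop :=
  A.RoleEdge d e ∧ ¬ A.DbEdge K d e ∧ ¬ A.DbEdge K e d

/-- The graph of tree edges. -/
def Str.forestGraph (A : Str) (K : ALCIKB) : SimpleGraph A.Dom where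
  Adj d e := d ≠ e ∧ A.TreeEdge K d e
  symm := ⟨by
    rintro d e ⟨hne, ⟨R, hR⟩, h1, h2⟩
    exact ⟨hne.symm, ⟨R, hR.symm⟩, h2, h1⟩⟩
  loopless := ⟨fun d h => h.1 rfl⟩

/-- `A` is a forest model of the ALCI KB `K`: a model that is the disjoint union
of tree-shaped structures, one rooted at each `c^A` for `c ∈ cons(D)`, extended
with the edges induced by the binary database atoms. -/
def Str.IsForestModel (A : Str) (K : ALCIKB) : Prop :=
  A.IsModel K.toKB ∧
  (∀ k R t, A.rel k R t → k = 1 ∨ k = 2) ∧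
  (∀ d : A.Dom, A.RoleEdge d d → A.DbEdge K d d) ∧
  (A.forestGraph K).IsAcyclic ∧
  (∀ d : A.Dom, ∃ c ∈ K.db.consts, (A.forestGraph K).Reachable (A.const c) d) ∧
  (∀ c ∈ K.db.consts, ∀ c' ∈ K.db.consts, A.const c ≠ A.const c' →
      ¬ (A.forestGraph K).Reachable (A.const c) (A.const c'))

/-- `A` has finite outdegree. -/
def Str.FiniteOutdegree (A : Str) : Prop :=
  ∀ d : A.Dom, {e : A.Dom | A.RoleEdge d e}.Finite

/-! ## Guarded bisimulations -/

/-- A set of domain elements is guarded in a structure. -/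
def Str.GuardedSet (A : Str) (G : Set A.Dom) : Prop :=
  (∃ d, G = {d}) ∨ ∃ k R, ∃ t : Fin k → A.Dom, A.rel k R t ∧ G = Set.range t

/-- A tuple is guarded in a structure. -/
def Str.GuardedTuple (A : Str) {k : ℕ} (t : Fin k → A.Dom) : Prop :=
  ∃ G, A.GuardedSet G ∧ Set.range t ⊆ G

/-- `a⃗ ↦ b⃗` is a partial Σ-isomorphism. -/
def PartialIso (sg : Set (ℕ × ℕ)) (A B : Str) {k : ℕ}
    (a : Fin k → A.Dom) (b : Fin k → B.Dom) : Prop :=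
  (∀ i j, a i = a j ↔ b i = b j) ∧
  ∀ m R, (m, R) ∈ sg → ∀ f : Fin m → Fin k, (A.rel m R (a ∘ f) ↔ B.rel m R (b ∘ f))

/-- A pair of equally long tuples in two structures. -/
structure GPair (A B : Str) : Type where
  k : ℕ
  a : Fin k → A.Dom
  b : Fin k → B.Dom

/-- Forth condition; if `conn = true` it is only required for guarded tuples
overlapping the current one (connected guarded bisimulations). -/
def StepForth (conn : Bool) (A B : Str) (I : Set (GPair A B)) (p : GPair A B) : Prop :=
  ∀ (k' : ℕ) (a' : Fin k' → A.Dom), A.GuardedTuple a' →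
    (conn → (Set.range a' ∩ Set.range p.a).Nonempty) →
    ∃ b' : Fin k' → B.Dom, GPair.mk k' a' b' ∈ I ∧ ∀ i j, p.a i = a' j → p.b i = b' j

/-- Back condition. -/
def StepBack (conn : Bool) (A B : Str) (I : Set (GPair A B)) (p : GPair A B) : Prop :=
  ∀ (k' : ℕ) (b' : Fin k' → B.Dom), B.GuardedTuple b' →
    (conn → (Set.range b' ∩ Set.range p.b).Nonempty) →
    ∃ a' : Fin k' → A.Dom, GPair.mk k' a' b' ∈ I ∧ ∀ i j, p.b i = b' j → p.a i = a' j

/-- `I` is a (connected, if `conn`) guarded Σ-bisimulation between `A` and `B`. -/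
def IsGBisim (conn : Bool) (sg : Set (ℕ × ℕ)) (A B : Str) (I : Set (GPair A B)) : Prop :=
  ∀ p ∈ I, A.GuardedTuple p.a ∧ B.GuardedTuple p.b ∧ PartialIso sg A B p.a p.b ∧
    StepForth conn A B I p ∧ StepBack conn A B I p

/-- `A,a⃗ ∼_{GF,Σ} B,b⃗` (`conn = false`) resp. `A,a⃗ ∼_{openGF,Σ} B,b⃗` (`conn = true`). -/
def GBisimilar (conn : Bool) (sg : Set (ℕ × ℕ)) (A : Str) {n : ℕ} (a : Fin n → A.Dom)
    (B : Str) (b : Fin n → B.Dom) : Prop :=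
  ∃ I : Set (GPair A B), IsGBisim conn sg A B I ∧ PartialIso sg A B a b ∧
    StepForth conn A B I ⟨n, a, b⟩ ∧ StepBack conn A B I ⟨n, a, b⟩

/-- A sequence `I_ℓ, …, I₀` witnessing (connected) guarded Σ `ℓ`-bisimilarity. -/
def IsGBisimSeq (conn : Bool) (sg : Set (ℕ × ℕ)) (A B : Str)
    (Is : ℕ → Set (GPair A B)) (ℓ : ℕ) : Prop :=
  (∀ i, i < ℓ → ∀ p ∈ Is i, A.GuardedTuple p.a ∧ B.GuardedTuple p.b) ∧
  (∀ i, i ≤ ℓ → ∀ p ∈ Is i, PartialIso sg A B p.a p.b) ∧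
  ∀ i, i < ℓ → ∀ p ∈ Is (i + 1), StepForth conn A B (Is i) p ∧ StepBack conn A B (Is i) p

/-- `A,a⃗ ∼^ℓ_{GF,Σ} B,b⃗` (`conn = false`) resp. `A,a⃗ ∼^ℓ_{openGF,Σ} B,b⃗` (`conn = true`). -/
def GLBisimilar (conn : Bool) (sg : Set (ℕ × ℕ)) (A : Str) {n : ℕ} (a : Fin n → A.Dom)
    (B : Str) (b : Fin n → B.Dom) (ℓ : ℕ) : Prop :=
  ∃ Is : ℕ → Set (GPair A B), IsGBisimSeq conn sg A B Is ℓ ∧ GPair.mk n a b ∈ Is ℓ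

/-! ## Guarded Σ ℓ-embeddings -/

/-- A pair of tuples: constants of a database and elements of a structure. -/
structure EPair (A : Str) : Type where
  k : ℕ
  c : Fin k → ℕ
  f : Fin k → A.Dom

/-- `p` is a partial embedding (injective partial homomorphism) from `D` into `A`. -/
def IsPartialEmbed (D : Database) (A : Str) (p : EPair A) : Prop :=
  (∀ i j, p.c i = p.c j ↔ p.f i = p.f j) ∧
  (∀ i, p.c i ∈ D.consts) ∧
  ∀ a ∈ D.atoms, ∀ g : Fin a.arity → Fin p.k, a.args = p.c ∘ g →
    A.rel a.arity a.rel (p.f ∘ g)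

/-- Guarded sets of a database. -/
def Database.GuardedSet (D : Database) (G : Set ℕ) : Prop :=
  (∃ c ∈ D.consts, G = {c}) ∨ ∃ a ∈ D.atoms, G = Set.range a.args

/-- `e` is a homomorphism from `D` onto `D'`. -/
def DbHomOnto (e : ℕ → ℕ) (D D' : Database) : Prop :=
  (∀ a ∈ D.atoms, a.mapC e ∈ D'.atoms) ∧ ∀ a' ∈ D'.atoms, ∃ a ∈ D.atoms, a.mapC e = a'

/-- `D,t⃗ ≼^ℓ_{openGF,Σ} A,b⃗`: there is a guarded Σ `ℓ`-embedding `(e, H)`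
between the pointed database `(D, t⃗)` and the pointed structure `(A, b⃗)`. -/
def GLEmbed (sg : Set (ℕ × ℕ)) (D : Database) {n : ℕ} (t : Fin n → ℕ)
    (A : Str) (b : Fin n → A.Dom) (ℓ : ℕ) : Prop :=
  ∃ (D' : Database) (e : ℕ → ℕ) (H : Set (EPair A)),
    DbHomOnto e D D' ∧
    (∀ p ∈ H, IsPartialEmbed D' A p) ∧
    EPair.mk n (e ∘ t) b ∈ H ∧
    (∀ G : Set ℕ, D'.GuardedSet G → ∃ p ∈ H, Set.range p.c = G) ∧
    ∀ p₁ ∈ H, ∀ p₂ ∈ H,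
      ∃ (m : ℕ) (j₁ : Fin m → Fin p₁.k) (j₂ : Fin m → Fin p₂.k),
        p₁.c ∘ j₁ = p₂.c ∘ j₂ ∧
        Set.range (p₁.c ∘ j₁) = Set.range p₁.c ∩ Set.range p₂.c ∧
        PartialIso sg A A (p₁.f ∘ j₁) (p₂.f ∘ j₂) ∧
        ∀ (k' : ℕ) (g : Fin k' → Fin m),
          Set.range (p₁.f ∘ j₁ ∘ g) = Set.range (p₁.f ∘ j₁) →
          GLBisimilar true sg A (p₁.f ∘ j₁ ∘ g) A (p₂.f ∘ j₂ ∘ g) ℓ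

/-! ## Gaifman graph of a structure -/

/-- Adjacency in the Gaifman graph of a structure. -/
def Str.Adj (A : Str) (d e : A.Dom) : Prop :=
  ∃ k R, ∃ t : Fin k → A.Dom, A.rel k R t ∧ d ∈ Set.range t ∧ e ∈ Set.range t

/-- `WithinDist A m d e`: `e` is at distance at most `m` from `d` in the
Gaifman graph of `A`. -/
def WithinDist (A : Str) : ℕ → A.Dom → A.Dom → Prop
  | 0, d, e => d = e
  | m + 1, d, e => d = e ∨ ∃ c, A.Adj d c ∧ WithinDist A m c e

/-! ## K-types for GF-KBs -/

/-- `cl(K)` for a GF-KB: the formulas of the ontology, equalities between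
distinct variables, and for every `R ∈ sig(K)` of arity `k` the formulas
`R(x⃗_k)`, `∃y⃗₁(R(x⃗_k) ∧ ¬ x_u = x_w)` and `∃y⃗₂ R(x⃗_k)` (`[y⃗₂] ⊆ [x⃗_k]∖{x_u,x_w}`),
closed under subformulas and single negation. -/
def KB.clGFbase (K : KB) : Set Fml :=
  K.onto ∪
  {φ | ∃ x y : ℕ, x ≠ y ∧ φ = Fml.eq x y} ∪
  {φ | ∃ k R, (k, R) ∈ K.sig ∧
    (φ = baseAtom k R ∨
     (∃ u w : ℕ, u < k ∧ w < k ∧ u ≠ w ∧ φ = connFml k R u w) ∨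
     ∃ u w : ℕ, u < k ∧ w < k ∧ u ≠ w ∧
       ∃ ys : List ℕ, (∀ z ∈ ys, z < k ∧ z ≠ u ∧ z ≠ w) ∧ φ = exList ys (baseAtom k R))}

def KB.clGF (K : KB) : Set Fml :=
  (⋃ φ ∈ K.clGFbase, φ.subfmls) ∪ Fml.neg '' (⋃ φ ∈ K.clGFbase, φ.subfmls)

/-- `tp_K(A, b⃗)`: the `K`-type of the tuple `b⃗` in `A`, represented as the set
of pairs `(φ, σ)` with `φ ∈ cl(K)` and `σ` a substitution of the variables of
`φ` by positions of `b⃗` making `φ` true at `b⃗`. -/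
def KB.tpGF (K : KB) (A : Str) {m : ℕ} (b : Fin m → A.Dom) : Set (Fml × (ℕ → Fin m)) :=
  {p | p.1 ∈ K.clGF ∧ p.1.Sat A fun x => b (p.2 x)}

/-- `Φ` is a `K`-type (of tuples of length `m`). -/
def KB.IsGFTypeAt (K : KB) {m : ℕ} (Φ : Set (Fml × (ℕ → Fin m))) : Prop :=
  ∃ A : Str, A.IsModel K ∧ ∃ b : Fin m → A.Dom, K.tpGF A b = Φ

/-- `Φ` is realizable in `K, t⃗`. -/
def KB.GFRealizableAt (K : KB) {m : ℕ} (t : Fin m → ℕ) (Φ : Set (Fml × (ℕ → Fin m))) : Prop :=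
  ∃ A : Str, A.IsModel K ∧ K.tpGF A (fun i => A.const (t i)) = Φ

/-- The tuple `w⃗` satisfies all (substituted) formulas of `Φ` in `A`. -/
def TypeSat (A : Str) {m : ℕ} (w : Fin m → A.Dom) (Φ : Set (Fml × (ℕ → Fin m))) : Prop :=
  ∀ p ∈ Φ, p.1.Sat A fun x => w (p.2 x)

/-- A `K`-type `Φ(x⃗)` is connected: it contains a formula `∃y⃗₁(R(x⃗) ∧ x_u ≠ x_w)`. -/
def GFTypeConnected {m : ℕ} (Φ : Set (Fml × (ℕ → Fin m))) : Prop :=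
  ∃ k R u w, ∃ σ : ℕ → Fin m, u < k ∧ w < k ∧ u ≠ w ∧ (connFml k R u w, σ) ∈ Φ

/-- A `K`-type `Φ(x⃗)` is guarded: it contains the atom `R(x⃗)` (on the full tuple). -/
def GFTypeGuarded {m : ℕ} (Φ : Set (Fml × (ℕ → Fin m))) : Prop :=
  ∃ R, ∃ σ : ℕ → Fin m, (∀ i : Fin m, σ i.1 = i) ∧ (baseAtom m R, σ) ∈ Φ

/-- A `K`-type is non-unary: it contains `¬ (x = y)` for (substituted-)distinct variables. -/
def GFTypeNonUnary {m : ℕ} (Φ : Set (Fml × (ℕ → Fin m))) : Prop :=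
  ∃ x y, ∃ σ : ℕ → Fin m, σ x ≠ σ y ∧ (Fml.neg (.eq x y), σ) ∈ Φ

/-- The restriction of a type `Φ(x⃗)` to the single variable `x_j`. -/
def GFRestrict1 {m : ℕ} (Φ : Set (Fml × (ℕ → Fin m))) (j : Fin m) :
    Set (Fml × (ℕ → Fin 1)) :=
  {q | ∃ σ : ℕ → Fin m, (q.1, σ) ∈ Φ ∧ ∀ x ∈ q.1.free, σ x = j}

/-- A `K`-type is openGF-complete: any two pointed models of `K` realizing it
are connected guarded `sig(K)`-bisimilar. -/
def KB.OpenGFComplete (K : KB) {m : ℕ} (Φ : Set (Fml × (ℕ → Fin m))) : Prop :=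
  ∀ A B : Str, A.IsModel K → B.IsModel K → ∀ (a : Fin m → A.Dom) (b : Fin m → B.Dom),
    K.tpGF A a = Φ → K.tpGF B b = Φ → GBisimilar true K.sig A a B b

/-! ## K-types with explicit variable tuples, and witness sequences -/

/-- A `K`-type together with an explicit tuple of distinct variables. -/
structure GFTypeV : Type where
  m : ℕ
  xs : Fin m → ℕ
  xs_inj : Function.Injective xs
  Phi : Set (Fml × (ℕ → Fin m))

/-- The type `T` is satisfied under the assignment `μ` of its variables. -/
def GFTypeV.SatUnder (T : GFTypeV) (A : Str) (μ : ℕ → A.Dom) : Prop :=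
  ∀ p ∈ T.Phi, p.1.Sat A fun x => μ (T.xs (p.2 x))

/-- `T` is a `K`-type. -/
def GFTypeV.IsTypeOf (T : GFTypeV) (K : KB) : Prop := K.IsGFTypeAt T.Phi

/-- Two types (with explicit variables) are coherent: some model of `K`
satisfies their union under a common assignment. -/
def GFCoherent (K : KB) (T₁ T₂ : GFTypeV) : Prop :=
  ∃ A : Str, A.IsModel K ∧ ∃ μ : ℕ → A.Dom, T₁.SatUnder A μ ∧ T₂.SatUnder A μ

/-- The sequence `Φ₀(x⃗₀),…,Φ_{n+1}(x⃗_{n+1})` witnesses openGF-incompleteness of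
the `K`-type `Φ(x)` with one free variable. -/
def GFWitSeq (K : KB) (Φ : Set (Fml × (ℕ → Fin 1))) (n : ℕ)
    (Ts : Fin (n + 2) → GFTypeV) : Prop :=
  (∃ j : Fin (Ts 0).m, GFRestrict1 (Ts 0).Phi j = Φ) ∧
  (∀ i : Fin (n + 2), (Ts i).IsTypeOf K ∧ GFTypeGuarded (Ts i).Phi ∧ GFTypeNonUnary (Ts i).Phi) ∧
  (∀ i : Fin (n + 1),
    (Set.range (Ts i.castSucc).xs ∩ Set.range (Ts i.succ).xs).Nonempty) ∧
  (∀ i : Fin (n + 1), GFCoherent K (Ts i.castSucc) (Ts i.succ)) ∧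
  ∃ A : Str, A.IsModel K ∧ ∃ μ : ℕ → A.Dom,
    (Ts ⟨n, by omega⟩).SatUnder A μ ∧
    ¬ ∃ μ' : ℕ → A.Dom,
        (∀ x, x ∈ Set.range (Ts ⟨n, by omega⟩).xs → x ∈ Set.range (Ts ⟨n + 1, by omega⟩).xs →
          μ' x = μ x) ∧
        (Ts ⟨n + 1, by omega⟩).SatUnder A μ'

/-! ## Relativization and finite controllability -/

/-- `L` has the relativization property. -/
def RelativizationProperty (L : Set Fml) : Prop :=
  ∀ φ ∈ L, φ.free = ∅ → ∀ c : ℕ, ((1 : ℕ), c) ∉ φ.sig →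
    ∃ φ' ∈ L, φ'.free = ∅ ∧ ∀ (B : Str) (v : ℕ → B.Dom),
      (φ'.Sat B v ↔ φ.SatIn B {d | B.rel 1 c ![d]} v)

/-- Evaluating queries from `Q` is finitely controllable on `L`-KBs. -/
def FinitelyControllable (Q L : Set Fml) : Prop :=
  ∀ K : KB, (∀ φ ∈ K.onto, φ ∈ L) → (∀ φ ∈ K.onto, φ.free = ∅) →
  ∀ (n : ℕ) (q : Fml), q ∈ Q → (∀ m ∈ q.free, m < n) →
  ∀ c : Fin n → ℕ,
  (∃ A : Str, A.IsModel K ∧ ∃ v : ℕ → A.Dom,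
      (∀ i : Fin n, v i.1 = A.const (c i)) ∧ ¬ q.Sat A v) →
  ∃ A : Str, Finite A.Dom ∧ A.IsModel K ∧ ∃ v : ℕ → A.Dom,
      (∀ i : Fin n, v i.1 = A.const (c i)) ∧ ¬ q.Sat A v

/-! Let `(e, H)` be the embedding and `D'` the image of `D_{con(a⃗)}` under `e`. Walking from `b⃗`
through overlapping guarded sets of `D'`, each partial embedding `p ∈ H` met after `r` steps is
realized by a guarded tuple `w` of `A` within distance `r` of `b⃗` that is `(ℓ - r)`-bisimilar to
`p.f`: the back condition of the bisimulation between the previous tuple and `p.f` on their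
overlap supplies `w`. As `D'` is connected to `e(a⃗)` and has at most `|D|` constants, every atom
of `D'` is reached within `|D|` steps. Tuples reached for the same constant of `D'` yield
`(ℓ - |D|)`-bisimilar elements near `b⃗`, since the members of `H` are `ℓ`-bisimilar on their
overlaps. If such elements are always equal, the values glue to a homomorphism
`D_{con(a⃗)}, a⃗ → A, b⃗`, because each `w` satisfies the same `Σ`-atoms as its `p.f`. -/

section Gaifman

variable {A : Str}

lemma WithinDist.refl (A : Str) : ∀ (m : ℕ) (d : A.Dom), WithinDist A m d d
  | 0, _ => rfl
  | _ + 1, _ => Or.inl rfl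

lemma WithinDist.succ : ∀ {m : ℕ} {x y : A.Dom}, WithinDist A m x y → WithinDist A (m + 1) x y
  | 0, _, _, h => Or.inl h
  | _ + 1, _, _, Or.inl h => Or.inl h
  | _ + 1, _, _, Or.inr ⟨c, hc, h⟩ => Or.inr ⟨c, hc, h.succ⟩

lemma WithinDist.mono {m m' : ℕ} {x y : A.Dom} (h : WithinDist A m x y) (hm : m ≤ m') :
    WithinDist A m' x y := by
  induction hm with
  | refl => exact h
  | step _ ih => exact ih.succ

lemma WithinDist.tail : ∀ {m : ℕ} {x y z : A.Dom}, WithinDist A m x y →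
    (y = z ∨ A.Adj y z) → WithinDist A (m + 1) x z
  | 0, _, _, z, rfl, Or.inl rfl => WithinDist.refl A 1 _
  | 0, _, _, z, rfl, Or.inr hyz => Or.inr ⟨z, hyz, rfl⟩
  | _ + 1, _, _, _, Or.inl rfl, hyz => (WithinDist.tail (m := 0) rfl hyz).mono (by omega)
  | _ + 1, _, _, _, Or.inr ⟨c, hc, h⟩, hyz => Or.inr ⟨c, hc, h.tail hyz⟩

lemma Str.GuardedTuple.mono {k k' : ℕ} {w : Fin k → A.Dom} {w' : Fin k' → A.Dom}
    (h : A.GuardedTuple w) (hs : Set.range w' ⊆ Set.range w) : A.GuardedTuple w' :=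
  let ⟨G, hG, hsub⟩ := h
  ⟨G, hG, hs.trans hsub⟩

lemma Str.GuardedTuple.eq_or_adj {k : ℕ} {w : Fin k → A.Dom} (h : A.GuardedTuple w)
    (i j : Fin k) : w i = w j ∨ A.Adj (w i) (w j) := by
  obtain ⟨G, ⟨d, rfl⟩ | ⟨k', R, u, hu, rfl⟩, hsub⟩ := h
  · exact Or.inl ((hsub ⟨i, rfl⟩).trans (hsub ⟨j, rfl⟩).symm)
  · exact Or.inr ⟨k', R, u, hu, hsub ⟨i, rfl⟩, hsub ⟨j, rfl⟩⟩

end Gaifman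

section Reachability

open SimpleGraph

variable {D D' : Database}

lemma Database.mem_consts_of_fromRel_adj {c d : ℕ} (h : (fromRel D.adj).Adj c d) :
    d ∈ D.consts :=
  h.2.elim (fun ⟨_, ha, _, hd⟩ => Set.mem_biUnion ha hd) fun ⟨_, ha, hd, _⟩ => Set.mem_biUnion ha hd

lemma Database.support_subset_consts {c x : ℕ} (hc : c ∈ D.consts) :
    ∀ W : (fromRel D.adj).Walk c x, ∀ v ∈ W.support, v ∈ D.consts
  | .nil, v, hv => by
    rw [Walk.support_nil, List.mem_singleton] at hv
    exact hv ▸ hc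
  | .cons hadj W, v, hv => by
    rcases List.mem_cons.1 (Walk.support_cons hadj W ▸ hv) with rfl | hv
    · exact hc
    · exact Database.support_subset_consts (D.mem_consts_of_fromRel_adj hadj) W v hv

lemma Database.exists_walk_length_lt {c x : ℕ} (hc : c ∈ D.consts)
    (h : (fromRel D.adj).Reachable c x) :
    ∃ W : (fromRel D.adj).Walk c x, W.length < D.consts.ncard := by
  classical
  obtain ⟨W⟩ := h
  refine ⟨W.bypass, ?_⟩
  have hsub : (W.bypass.support.toFinset : Set ℕ) ⊆ D.consts := fun v hv =>
    D.support_subset_consts hc W v (W.support_bypass_subset_support (List.mem_toFinset.1 hv))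
  calc W.bypass.length < W.bypass.support.length := by rw [Walk.length_support]; omega
    _ = W.bypass.support.toFinset.card :=
      (List.toFinset_card_of_nodup W.bypass_isPath.support_nodup).symm
    _ ≤ D.consts.ncard := by
      rw [← Set.ncard_coe_finset]
      exact Set.ncard_le_ncard hsub D.consts_finite

lemma Database.adj.reachable {c d : ℕ} (h : D.adj c d) : (fromRel D.adj).Reachable c d := by
  by_cases hcd : c = d
  · exact hcd ▸ Reachable.refl c
  · exact Adj.reachable ⟨hcd, Or.inl h⟩

lemma Database.adj.map {e : ℕ → ℕ} (he : ∀ a ∈ D.atoms, a.mapC e ∈ D'.atoms) {c d : ℕ}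
    (h : D.adj c d) : D'.adj (e c) (e d) :=
  let ⟨a, ha, ⟨i, hi⟩, ⟨j, hj⟩⟩ := h
  ⟨a.mapC e, he a ha, ⟨i, congrArg e hi⟩, ⟨j, congrArg e hj⟩⟩

lemma Database.reflTransGen_adj_conRestrictSet (D : Database) {S : Set ℕ} {c d : ℕ}
    (hc : c ∈ S) (h : Relation.ReflTransGen D.adj c d) :
    Relation.ReflTransGen (D.conRestrictSet S).adj c d := by
  induction h with
  | refl => exact .refl
  | tail hpre hstep ih =>
    obtain ⟨a, ha, hb, hd⟩ := hstep
    exact ih.tail ⟨a, ⟨ha, c, hc, _, hb, hpre⟩, hb, hd⟩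

lemma Database.conRestrictSet_sig_subset (D : Database) (S : Set ℕ) :
    (D.conRestrictSet S).sig ⊆ D.sig :=
  Set.image_mono fun _ ha => ha.1

lemma Database.conRestrictSet_consts_subset (D : Database) (S : Set ℕ) :
    (D.conRestrictSet S).consts ⊆ D.consts :=
  Set.biUnion_mono (fun _ ha => ha.1) fun _ _ => subset_rfl

variable {e : ℕ → ℕ}

lemma DbHomOnto.sig_subset (he : DbHomOnto e D D') : D'.sig ⊆ D.sig := by
  rintro _ ⟨a', ha', rfl⟩
  obtain ⟨a, ha, rfl⟩ := he.2 a' ha'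
  exact ⟨a, ha, rfl⟩

lemma DbHomOnto.ncard_consts_le (he : DbHomOnto e D D') : D'.consts.ncard ≤ D.consts.ncard := by
  have hsub : D'.consts ⊆ e '' D.consts := by
    intro c hc
    obtain ⟨a', ha', i, rfl⟩ := Set.mem_iUnion₂.1 hc
    obtain ⟨a, ha, rfl⟩ := he.2 a' ha'
    exact ⟨a.args i, Set.mem_biUnion ha ⟨i, rfl⟩, rfl⟩
  exact (Set.ncard_le_ncard hsub (D.consts_finite.image e)).trans
    (Set.ncard_image_le D.consts_finite)

lemma DbHomOnto.exists_reachable_of_conRestrict {n : ℕ} {t : Fin n → ℕ}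
    (he : DbHomOnto e (D.conRestrict t) D') {a' : Atom} (ha' : a' ∈ D'.atoms) :
    ∃ c ∈ Set.range a'.args, ∃ x ∈ Set.range (e ∘ t), (fromRel D'.adj).Reachable c x := by
  obtain ⟨a, ⟨-, _, ⟨i, rfl⟩, _, ⟨j, rfl⟩, hpath⟩, rfl⟩ := he.2 a' ha'
  have hpath' : Relation.ReflTransGen (D.conRestrict t).adj (t i) (a.args j) :=
    D.reflTransGen_adj_conRestrictSet ⟨i, rfl⟩ hpath
  refine ⟨e (a.args j), ⟨j, rfl⟩, e (t i), ⟨i, rfl⟩, Reachable.symm ?_⟩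
  refine (reachable_iff_reflTransGen _ _).2 (Relation.ReflTransGen.lift' e ?_ _ _ hpath')
  exact fun u v huv => (reachable_iff_reflTransGen _ _).1 (huv.map he.1).reachable

end Reachability

section Bisimulation

variable {A B C : Str} {conn : Bool} {sg : Set (ℕ × ℕ)}

lemma PartialIso.symm {k : ℕ} {a : Fin k → A.Dom} {b : Fin k → B.Dom}
    (h : PartialIso sg A B a b) : PartialIso sg B A b a :=
  ⟨fun i j => (h.1 i j).symm, fun m R hR f => (h.2 m R hR f).symm⟩

lemma PartialIso.trans {k : ℕ} {a : Fin k → A.Dom} {b : Fin k → B.Dom} {c : Fin k → C.Dom}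
    (hab : PartialIso sg A B a b) (hbc : PartialIso sg B C b c) : PartialIso sg A C a c :=
  ⟨fun i j => (hab.1 i j).trans (hbc.1 i j),
    fun m R hR f => (hab.2 m R hR f).trans (hbc.2 m R hR f)⟩

lemma PartialIso.comp {k m : ℕ} {a : Fin k → A.Dom} {b : Fin k → B.Dom}
    (h : PartialIso sg A B a b) (j : Fin m → Fin k) : PartialIso sg A B (a ∘ j) (b ∘ j) :=
  ⟨fun i i' => h.1 (j i) (j i'), fun m' R hR f => h.2 m' R hR (j ∘ f)⟩

lemma IsGBisimSeq.mono {Is : ℕ → Set (GPair A B)} {ℓ ℓ' : ℕ}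
    (h : IsGBisimSeq conn sg A B Is ℓ) (hle : ℓ' ≤ ℓ) : IsGBisimSeq conn sg A B Is ℓ' :=
  ⟨fun i hi => h.1 i (by omega), fun i hi => h.2.1 i (by omega), fun i hi => h.2.2 i (by omega)⟩

namespace GLBisimilar

variable {n : ℕ} {a : Fin n → A.Dom} {b : Fin n → B.Dom} {ℓ : ℕ}

lemma partialIso (h : GLBisimilar conn sg A a B b ℓ) : PartialIso sg A B a b :=
  let ⟨_, hseq, hmem⟩ := h
  hseq.2.1 ℓ le_rfl _ hmem

lemma mono (h : GLBisimilar conn sg A a B b ℓ) {ℓ' : ℕ} (hle : ℓ' ≤ ℓ) :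
    GLBisimilar conn sg A a B b ℓ' := by
  obtain ⟨Is, hseq, hmem⟩ := h
  refine ⟨fun i => Is (i + (ℓ - ℓ')), ⟨fun i hi => hseq.1 _ (by omega),
    fun i hi => hseq.2.1 _ (by omega), fun i hi => ?_⟩, ?_⟩
  · dsimp only
    rw [show i + 1 + (ℓ - ℓ') = i + (ℓ - ℓ') + 1 by omega]
    exact hseq.2.2 _ (by omega)
  · simpa only [show ℓ' + (ℓ - ℓ') = ℓ by omega] using hmem

protected lemma refl (conn : Bool) (sg : Set (ℕ × ℕ)) (a : Fin n → A.Dom) (ℓ : ℕ) :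
    GLBisimilar conn sg A a A a ℓ := by
  refine ⟨fun i => {p | p.a = p.b ∧ (A.GuardedTuple p.a ∨ ℓ ≤ i)},
    ⟨?_, ?_, ?_⟩, ⟨rfl, Or.inr le_rfl⟩⟩
  · rintro i hi ⟨k, pa, pb⟩ ⟨heq, hg⟩
    obtain rfl : pa = pb := heq
    have hg' : A.GuardedTuple pa := hg.resolve_right (by omega)
    exact ⟨hg', hg'⟩
  · rintro i _ ⟨k, pa, pb⟩ ⟨heq, _⟩
    obtain rfl : pa = pb := heq
    exact ⟨fun _ _ => Iff.rfl, fun _ _ _ _ => Iff.rfl⟩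
  · rintro i _ ⟨k, pa, pb⟩ ⟨heq, _⟩
    obtain rfl : pa = pb := heq
    exact ⟨fun k' a' hg _ => ⟨a', ⟨rfl, Or.inl hg⟩, fun _ _ h => h⟩,
      fun k' b' hg _ => ⟨b', ⟨rfl, Or.inl hg⟩, fun _ _ h => h⟩⟩

protected lemma symm (h : GLBisimilar conn sg A a B b ℓ) : GLBisimilar conn sg B b A a ℓ := by
  obtain ⟨Is, ⟨hguard, hiso, hstep⟩, hmem⟩ := h
  refine ⟨fun i => {q | GPair.mk q.k q.b q.a ∈ Is i},
    ⟨fun i hi q hq => (hguard i hi _ hq).symm, fun i hi q hq => (hiso i hi _ hq).symm,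
      fun i hi q hq => (hstep i hi _ hq).symm⟩, hmem⟩

lemma comp (h : GLBisimilar conn sg A a B b ℓ) {m : ℕ} (j : Fin m → Fin n) :
    GLBisimilar conn sg A (a ∘ j) B (b ∘ j) ℓ := by
  obtain ⟨Is, ⟨hguard, hiso, hstep⟩, hmem⟩ := h
  refine ⟨fun i => {q | ∃ p ∈ Is i, ∃ jj : Fin q.k → Fin p.k, q.a = p.a ∘ jj ∧ q.b = p.b ∘ jj},
    ⟨?_, ?_, ?_⟩, ⟨⟨n, a, b⟩, hmem, j, rfl, rfl⟩⟩
  · rintro i hi ⟨k, qa, qb⟩ ⟨p, hp, jj, hqa, hqb⟩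
    dsimp only at jj hqa hqb
    subst hqa hqb
    exact ⟨(hguard i hi p hp).1.mono (Set.range_comp_subset_range jj p.a),
      (hguard i hi p hp).2.mono (Set.range_comp_subset_range jj p.b)⟩
  · rintro i hi ⟨k, qa, qb⟩ ⟨p, hp, jj, hqa, hqb⟩
    dsimp only at jj hqa hqb
    subst hqa hqb
    exact (hiso i hi p hp).comp jj
  · rintro i hi ⟨k, qa, qb⟩ ⟨p, hp, jj, hqa, hqb⟩
    dsimp only at jj hqa hqb
    subst hqa hqb
    have hsub {X : Str} {u : Fin p.k → X.Dom} {k' : ℕ} {v : Fin k' → X.Dom}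
        (hov : conn → (Set.range v ∩ Set.range (u ∘ jj)).Nonempty) :
        conn → (Set.range v ∩ Set.range u).Nonempty := fun hc =>
      (hov hc).mono (Set.inter_subset_inter_right _ (Set.range_comp_subset_range jj u))
    refine ⟨fun k' a' hg hov => ?_, fun k' b' hg hov => ?_⟩
    · obtain ⟨b', hb', hag⟩ := (hstep i hi p hp).1 k' a' hg (hsub hov)
      exact ⟨b', ⟨⟨k', a', b'⟩, hb', id, rfl, rfl⟩, fun i' j' => hag (jj i') j'⟩
    · obtain ⟨a', ha', hag⟩ := (hstep i hi p hp).2 k' b' hg (hsub hov)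
      exact ⟨a', ⟨⟨k', a', b'⟩, ha', id, rfl, rfl⟩, fun i' j' => hag (jj i') j'⟩

protected lemma trans {c : Fin n → C.Dom} (hab : GLBisimilar conn sg A a B b ℓ)
    (hbc : GLBisimilar conn sg B b C c ℓ) : GLBisimilar conn sg A a C c ℓ := by
  obtain ⟨I₁, ⟨hguard₁, hiso₁, hstep₁⟩, hmem₁⟩ := hab
  obtain ⟨I₂, ⟨hguard₂, hiso₂, hstep₂⟩, hmem₂⟩ := hbc
  refine ⟨fun i => {q : GPair A C | ∃ mb : Fin q.k → B.Dom,
      GPair.mk q.k q.a mb ∈ I₁ i ∧ GPair.mk q.k mb q.b ∈ I₂ i},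
    ⟨?_, ?_, ?_⟩, ⟨b, hmem₁, hmem₂⟩⟩
  · rintro i hi q ⟨mb, hq₁, hq₂⟩
    exact ⟨(hguard₁ i hi _ hq₁).1, (hguard₂ i hi _ hq₂).2⟩
  · rintro i hi q ⟨mb, hq₁, hq₂⟩
    exact (hiso₁ i hi _ hq₁).trans (hiso₂ i hi _ hq₂)
  · rintro i hi q ⟨mb, hq₁, hq₂⟩
    refine ⟨fun k' a' hg hov => ?_, fun k' c' hg hov => ?_⟩
    · obtain ⟨mb', hmb', hag₁⟩ := (hstep₁ i hi _ hq₁).1 k' a' hg hov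
      obtain ⟨c', hc', hag₂⟩ := (hstep₂ i hi _ hq₂).1 k' mb' (hguard₁ i hi _ hmb').2 fun hc => by
        obtain ⟨x, ⟨j', hj'⟩, ⟨i', hi'⟩⟩ := hov hc
        exact ⟨mb' j', ⟨j', rfl⟩, ⟨i', hag₁ i' j' (hi'.trans hj'.symm)⟩⟩
      exact ⟨c', ⟨mb', hmb', hc'⟩, fun i' j' h' => hag₂ i' j' (hag₁ i' j' h')⟩
    · obtain ⟨mb', hmb', hag₂⟩ := (hstep₂ i hi _ hq₂).2 k' c' hg hov
      obtain ⟨a', ha', hag₁⟩ := (hstep₁ i hi _ hq₁).2 k' mb' (hguard₂ i hi _ hmb').1 fun hc => by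
        obtain ⟨x, ⟨j', hj'⟩, ⟨i', hi'⟩⟩ := hov hc
        exact ⟨mb' j', ⟨j', rfl⟩, ⟨i', hag₂ i' j' (hi'.trans hj'.symm)⟩⟩
      exact ⟨a', ⟨mb', ha', hmb'⟩, fun i' j' h' => hag₁ i' j' (hag₂ i' j' h')⟩

lemma exists_back (h : GLBisimilar conn sg A a B b (ℓ + 1)) {k : ℕ} {b' : Fin k → B.Dom}
    (hb' : B.GuardedTuple b') (hov : conn → (Set.range b' ∩ Set.range b).Nonempty) :
    ∃ a' : Fin k → A.Dom, A.GuardedTuple a' ∧ GLBisimilar conn sg A a' B b' ℓ ∧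
      ∀ i j, b i = b' j → a i = a' j := by
  obtain ⟨Is, hseq, hmem⟩ := h
  obtain ⟨a', ha', hag⟩ := (hseq.2.2 ℓ ℓ.lt_succ_self _ hmem).2 k b' hb' hov
  exact ⟨a', (hseq.1 ℓ ℓ.lt_succ_self _ ha').1, ⟨Is, hseq.mono ℓ.le_succ, ha'⟩, hag⟩

end GLBisimilar

end Bisimulation

section Embedding

variable {A : Str} {sg : Set (ℕ × ℕ)} {ℓ : ℕ} {D : Database} {H : Set (EPair A)}

lemma IsPartialEmbed.exists_rel {p : EPair A} (hp : IsPartialEmbed D A p) {a : Atom}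
    (ha : a ∈ D.atoms) (hrange : Set.range p.c = Set.range a.args) :
    ∃ g : Fin a.arity → Fin p.k, a.args = p.c ∘ g ∧ A.rel a.arity a.rel (p.f ∘ g) := by
  have hg : ∀ s, ∃ i, p.c i = a.args s := fun s => (hrange ▸ Set.mem_range_self s :)
  choose g hg using hg
  have hargs : a.args = p.c ∘ g := funext fun s => (hg s).symm
  exact ⟨g, hargs, hp.2.2 a ha g hargs⟩

lemma IsPartialEmbed.guardedTuple {p : EPair A} (hp : IsPartialEmbed D A p) {a : Atom}
    (ha : a ∈ D.atoms) (hrange : Set.range p.c = Set.range a.args) : A.GuardedTuple p.f := by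
  obtain ⟨g, hargs, hrel⟩ := hp.exists_rel ha hrange
  refine ⟨_, Or.inr ⟨a.arity, a.rel, p.f ∘ g, hrel, rfl⟩, ?_⟩
  rintro _ ⟨i, rfl⟩
  obtain ⟨s, hs⟩ : p.c i ∈ Set.range a.args := hrange ▸ Set.mem_range_self i
  exact ⟨s, ((hp.1 (g s) i).1 (by rw [← hs, hargs]; rfl))⟩

/-- The conditions that `GLEmbed` imposes on its family `H` of partial embeddings. -/
structure GEmbFamily (sg : Set (ℕ × ℕ)) (ℓ : ℕ) (D : Database) (A : Str) (H : Set (EPair A)) :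
    Prop where
  embed : ∀ p ∈ H, IsPartialEmbed D A p
  cover : ∀ G : Set ℕ, D.GuardedSet G → ∃ p ∈ H, Set.range p.c = G
  compat : ∀ p₁ ∈ H, ∀ p₂ ∈ H,
    ∃ (m : ℕ) (j₁ : Fin m → Fin p₁.k) (j₂ : Fin m → Fin p₂.k),
      p₁.c ∘ j₁ = p₂.c ∘ j₂ ∧
      Set.range (p₁.c ∘ j₁) = Set.range p₁.c ∩ Set.range p₂.c ∧
      PartialIso sg A A (p₁.f ∘ j₁) (p₂.f ∘ j₂) ∧
      ∀ (k' : ℕ) (g : Fin k' → Fin m),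
        Set.range (p₁.f ∘ j₁ ∘ g) = Set.range (p₁.f ∘ j₁) →
        GLBisimilar true sg A (p₁.f ∘ j₁ ∘ g) A (p₂.f ∘ j₂ ∘ g) ℓ

def IsNearCopy (sg : Set (ℕ × ℕ)) (ℓ : ℕ) (H : Set (EPair A)) {n : ℕ} (b : Fin n → A.Dom)
    (r : ℕ) (p : EPair A) (w : Fin p.k → A.Dom) : Prop :=
  p ∈ H ∧ GLBisimilar true sg A w A p.f (ℓ - r) ∧ ∀ i, ∃ i₀, WithinDist A r (b i₀) (w i)

namespace GEmbFamily

variable {n : ℕ} {t : Fin n → ℕ} {b : Fin n → A.Dom}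

lemma bisimilar_overlap (hH : GEmbFamily sg ℓ D A H) {p₁ p₂ : EPair A} (h₁ : p₁ ∈ H)
    (h₂ : p₂ ∈ H) :
    ∃ (m : ℕ) (j₁ : Fin m → Fin p₁.k) (j₂ : Fin m → Fin p₂.k),
      p₁.c ∘ j₁ = p₂.c ∘ j₂ ∧ Set.range (p₁.c ∘ j₁) = Set.range p₁.c ∩ Set.range p₂.c ∧
      GLBisimilar true sg A (p₁.f ∘ j₁) A (p₂.f ∘ j₂) ℓ := by
  obtain ⟨m, j₁, j₂, hc, hrange, -, hbis⟩ := hH.compat p₁ h₁ p₂ h₂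
  exact ⟨m, j₁, j₂, hc, hrange, hbis m id rfl⟩

lemma bisimilar_of_c_eq (hH : GEmbFamily sg ℓ D A H) {p₁ p₂ : EPair A} (h₁ : p₁ ∈ H)
    (h₂ : p₂ ∈ H) {i₁ : Fin p₁.k} {i₂ : Fin p₂.k} (hc : p₁.c i₁ = p₂.c i₂) :
    GLBisimilar true sg A (fun _ : Fin 1 => p₁.f i₁) A (fun _ : Fin 1 => p₂.f i₂) ℓ := by
  obtain ⟨m, j₁, j₂, hcc, hrange, hbis⟩ := hH.bisimilar_overlap h₁ h₂
  obtain ⟨s, hs⟩ : p₁.c i₁ ∈ Set.range (p₁.c ∘ j₁) := hrange ▸ ⟨⟨i₁, rfl⟩, ⟨i₂, hc.symm⟩⟩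
  have e₁ : p₁.f (j₁ s) = p₁.f i₁ := ((hH.embed p₁ h₁).1 _ _).1 hs
  have e₂ : p₂.f (j₂ s) = p₂.f i₂ :=
    ((hH.embed p₂ h₂).1 _ _).1 ((congrFun hcc s).symm.trans (hs.trans hc))
  simpa only [Function.comp_def, e₁, e₂] using hbis.comp fun _ : Fin 1 => s

lemma bisimilar_of_nearCopy (hH : GEmbFamily sg ℓ D A H) {N r₁ r₂ : ℕ} {p₁ p₂ : EPair A}
    {w₁ : Fin p₁.k → A.Dom} {w₂ : Fin p₂.k → A.Dom} (hw₁ : IsNearCopy sg ℓ H b r₁ p₁ w₁)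
    (hw₂ : IsNearCopy sg ℓ H b r₂ p₂ w₂) (hr₁ : r₁ ≤ N) (hr₂ : r₂ ≤ N)
    {i₁ : Fin p₁.k} {i₂ : Fin p₂.k} (hc : p₁.c i₁ = p₂.c i₂) :
    GLBisimilar true sg A (fun _ : Fin 1 => w₁ i₁) A (fun _ : Fin 1 => w₂ i₂) (ℓ - N) :=
  ((((hw₁.2.1.comp fun _ : Fin 1 => i₁).mono (by omega)).trans
    ((hH.bisimilar_of_c_eq hw₁.1 hw₂.1 hc).mono (by omega))).trans
    ((hw₂.2.1.comp fun _ : Fin 1 => i₂).symm.mono (by omega)))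

lemma exists_nearCopy_succ (hH : GEmbFamily sg ℓ D A H) {r : ℕ} {p : EPair A}
    {w : Fin p.k → A.Dom} (hw : IsNearCopy sg ℓ H b r p w) (hr : r < ℓ) {a : Atom}
    (ha : a ∈ D.atoms) (hov : (Set.range a.args ∩ Set.range p.c).Nonempty) :
    ∃ (p' : EPair A) (w' : Fin p'.k → A.Dom), Set.range p'.c = Set.range a.args ∧
      IsNearCopy sg ℓ H b (r + 1) p' w' := by
  obtain ⟨p', hp', hrange'⟩ := hH.cover _ (Or.inr ⟨a, ha, rfl⟩)
  obtain ⟨m, j₁, j₂, hcc, hrange, hbis⟩ := hH.bisimilar_overlap hw.1 hp'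
  obtain ⟨-, s, -⟩ : (Set.range (p.c ∘ j₁)).Nonempty := by
    rw [hrange, Set.inter_comm, hrange']
    exact hov
  have hwp' : GLBisimilar true sg A (w ∘ j₁) A (p'.f ∘ j₂) (ℓ - r - 1 + 1) :=
    (hw.2.1.comp j₁).trans (hbis.mono (by omega)) |>.mono (by omega)
  obtain ⟨w', hguard, hbis', hagree⟩ := hwp'.exists_back
    ((hH.embed p' hp').guardedTuple ha hrange') fun _ => ⟨_, ⟨j₂ s, rfl⟩, ⟨s, rfl⟩⟩
  refine ⟨p', w', hrange', hp', hbis'.mono (by omega), fun i => ?_⟩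
  obtain ⟨i₀, hi₀⟩ := hw.2.2 (j₁ s)
  have hshared : w (j₁ s) = w' (j₂ s) := hagree s (j₂ s) rfl
  exact ⟨i₀, hi₀.tail (hshared ▸ hguard.eq_or_adj (j₂ s) i)⟩

lemma exists_nearCopy_of_walk (hH : GEmbFamily sg ℓ D A H) (hp₀ : ⟨n, t, b⟩ ∈ H) {c x : ℕ}
    (W : (SimpleGraph.fromRel D.adj).Walk c x) (hx : x ∈ Set.range t) (hW : W.length < ℓ)
    {a : Atom} (ha : a ∈ D.atoms) (hc : c ∈ Set.range a.args) :
    ∃ (p : EPair A) (w : Fin p.k → A.Dom), Set.range p.c = Set.range a.args ∧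
      IsNearCopy sg ℓ H b (W.length + 1) p w := by
  induction W generalizing a with
  | nil =>
    exact hH.exists_nearCopy_succ
      ⟨hp₀, GLBisimilar.refl _ _ _ _, fun i => ⟨i, WithinDist.refl A 0 _⟩⟩ hW ha ⟨_, hc, hx⟩
  | cons hadj W ih =>
    obtain ⟨a', ha', hu, hv⟩ := hadj.2.elim id fun ⟨a', ha', hv, hu⟩ => ⟨a', ha', hu, hv⟩
    rw [SimpleGraph.Walk.length_cons] at hW ⊢
    obtain ⟨p, w, hrange, hw⟩ := ih hx (by omega) ha' hv
    exact hH.exists_nearCopy_succ hw (by omega) ha ⟨_, hc, hrange ▸ hu⟩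

lemma exists_nearCopy_of_atom (hH : GEmbFamily sg ℓ D A H) (hp₀ : ⟨n, t, b⟩ ∈ H)
    (hℓ : D.consts.ncard ≤ ℓ) {a : Atom} (ha : a ∈ D.atoms)
    (hreach : ∃ c ∈ Set.range a.args, ∃ x ∈ Set.range t,
      (SimpleGraph.fromRel D.adj).Reachable c x) :
    ∃ r ≤ D.consts.ncard, ∃ (p : EPair A) (w : Fin p.k → A.Dom),
      Set.range p.c = Set.range a.args ∧ IsNearCopy sg ℓ H b r p w := by
  obtain ⟨c, hc, x, hx, hcx⟩ := hreach
  obtain ⟨W, hW⟩ := D.exists_walk_length_lt (Set.mem_biUnion ha hc) hcx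
  obtain ⟨p, w, hrange, hw⟩ := hH.exists_nearCopy_of_walk hp₀ W hx (by omega) ha hc
  exact ⟨W.length + 1, hW, p, w, hrange, hw⟩

theorem exists_dbHom (hH : GEmbFamily sg ℓ D A H) (hsig : D.sig ⊆ sg) (hp₀ : ⟨n, t, b⟩ ∈ H)
    (hreach : ∀ a ∈ D.atoms, ∃ c ∈ Set.range a.args, ∃ x ∈ Set.range t,
      (SimpleGraph.fromRel D.adj).Reachable c x)
    {N : ℕ} (hN : D.consts.ncard ≤ N) (hNℓ : N ≤ ℓ)
    (hsep : ∀ d d' : A.Dom, (∃ i, WithinDist A N (b i) d) → (∃ i, WithinDist A N (b i) d') →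
      GLBisimilar true sg A (fun _ : Fin 1 => d) A (fun _ : Fin 1 => d') (ℓ - N) → d = d') :
    ∃ h : ℕ → A.Dom, DbHom D A h ∧ ∀ i, h (t i) = b i := by
  have := A.dom_nonempty
  let Val (c : ℕ) (d : A.Dom) : Prop :=
    ∃ r ≤ N, ∃ (p : EPair A) (w : Fin p.k → A.Dom) (i : Fin p.k),
      IsNearCopy sg ℓ H b r p w ∧ p.c i = c ∧ w i = d
  have hval {c d} (hd : Val c d) : Classical.epsilon (Val c) = d := by
    obtain ⟨r₁, hr₁, p₁, w₁, i₁, hw₁, hc₁, hd₁⟩ := Classical.epsilon_spec ⟨d, hd⟩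
    obtain ⟨r₂, hr₂, p₂, w₂, i₂, hw₂, hc₂, rfl⟩ := hd
    obtain ⟨j₁, hj₁⟩ := hw₁.2.2 i₁
    obtain ⟨j₂, hj₂⟩ := hw₂.2.2 i₂
    rw [← hd₁]
    exact hsep _ _ ⟨j₁, hj₁.mono hr₁⟩ ⟨j₂, hj₂.mono hr₂⟩
      (hH.bisimilar_of_nearCopy hw₁ hw₂ hr₁ hr₂ (hc₁.trans hc₂.symm))
  refine ⟨fun c => Classical.epsilon (Val c), fun a ha => ?_, fun i =>
    hval ⟨0, Nat.zero_le N, _, b, i,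
      ⟨hp₀, GLBisimilar.refl _ _ _ _, fun i => ⟨i, WithinDist.refl A 0 _⟩⟩, rfl, rfl⟩⟩
  obtain ⟨r, hr, p, w, hrange, hw⟩ :=
    hH.exists_nearCopy_of_atom hp₀ (hN.trans hNℓ) ha (hreach a ha)
  obtain ⟨g, hargs, hrel⟩ := (hH.embed p hw.1).exists_rel ha hrange
  have hvals : (fun s => Classical.epsilon (Val (a.args s))) = w ∘ g :=
    funext fun s => hval ⟨r, hr.trans hN, p, w, g s, hw, (congrFun hargs s).symm, rfl⟩
  show A.rel a.arity a.rel fun s => Classical.epsilon (Val (a.args s))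
  rw [hvals]
  exact (hw.2.1.partialIso.2 _ _ (hsig ⟨a, ha, rfl⟩) g).2 hrel

end GEmbFamily

end Embedding

theorem statement_17_general {n : ℕ} (D : Database) (t : Fin n → ℕ)
    (A : Str) (b : Fin n → A.Dom) (sg : Set (ℕ × ℕ)) (hsg : D.sig ⊆ sg)
    (ℓ : ℕ) (hℓ : D.csize ≤ ℓ)
    (hemb : GLEmbed sg (D.conRestrict t) t A b ℓ)
    (hhom : ¬ PointedHom (D.conRestrict t) t A b) :
    ∃ d d' : A.Dom, d ≠ d' ∧
      (∃ i : Fin n, WithinDist A D.csize (b i) d) ∧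
      (∃ i : Fin n, WithinDist A D.csize (b i) d') ∧
      GLBisimilar true sg A (fun _ : Fin 1 => d) A (fun _ : Fin 1 => d') (ℓ - D.csize) := by
  obtain ⟨D', e, H, he, hembed, hp₀, hcover, hcompat⟩ := hemb
  by_contra hfar
  obtain ⟨h, hh, hb⟩ := GEmbFamily.exists_dbHom (N := D.csize) ⟨hembed, hcover, hcompat⟩
    (he.sig_subset.trans ((D.conRestrictSet_sig_subset _).trans hsg)) hp₀
    (fun a' ha' => he.exists_reachable_of_conRestrict ha')
    (he.ncard_consts_le.trans
      (Set.ncard_le_ncard (D.conRestrictSet_consts_subset _) D.consts_finite)) hℓ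
    fun d d' hd hd' hdd' => by_contra fun hne => hfar ⟨d, d', hne, hd, hd', hdd'⟩
  exact hhom ⟨h ∘ e, fun a ha => hh _ (he.1 a ha), hb⟩

/-- a guarded ℓ-embedding without a homomorphism forces two
distinct connected-guarded-(ℓ−|D|)-bisimilar elements near the parameters. -/
theorem statement_17 {n : ℕ} (D : Database) (t : Fin n → ℕ)
    (ht : ∀ i : Fin n, t i ∈ D.consts)
    (A : Str) (b : Fin n → A.Dom) (sg : Set (ℕ × ℕ)) (hsg : D.sig ⊆ sg)
    (ℓ : ℕ) (hℓ : D.csize ≤ ℓ)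
    (hemb : GLEmbed sg (D.conRestrict t) t A b ℓ)
    (hhom : ¬ PointedHom (D.conRestrict t) t A b) :
    ∃ d d' : A.Dom, d ≠ d' ∧
      (∃ i : Fin n, WithinDist A D.csize (b i) d) ∧
      (∃ i : Fin n, WithinDist A D.csize (b i) d') ∧
      GLBisimilar true sg A (fun _ : Fin 1 => d) A (fun _ : Fin 1 => d') (ℓ - D.csize) :=
  statement_17_general D t A b sg hsg ℓ hℓ hemb hhom

end Sep
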